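/- Let n ≥ 1, μ0, μ1 ∈ ℝⁿ, let Σ0, Σ1 be symmetric positive definite real n×n matrices, and define A = Σ0^{−1/2}(Σ0^{1/2} Σ1 Σ0^{1/2})^{1/2} Σ0^{−1/2}, and for s ∈ [0,1] the McCann map T_s(ξ) = (1−s)ξ + s(μ1 + A(ξ − μ0)), the matrix M_s = (1−s)I + sA, and Σ_s = Σ0^{−1/2}((1−s)Σ0 + s(Σ0^{1/2} Σ1 Σ0^{1/2})^{1/2})² Σ0^{−1/2}. Then for every s ∈ [0,1] and every ξ ∈ ℝⁿ, φ(ξ; μ0, Σ0) = φ(T_s(ξ); (1−s)μ0 + sμ1, Σ_s) · det M_s; i.e., the displacement interpolant between the two Gaussian densities is itself Gaussian, with mean (1−s)μ0 + sμ1 and covariance Σ_s. -/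

import Mathlib

/-!
Put `B_s = (1 - s) Σ0 + s (Σ0^{1/2} Σ1 Σ0^{1/2})^{1/2}`, a convex combination of positive
definite matrices. Since `Σ0^{-1/2} Σ0 Σ0^{-1/2} = I`, the matrix `M_s` equals
`Σ0^{-1/2} B_s Σ0^{-1/2}`; it is symmetric with positive determinant, and
`Σ_s = M_s Σ0 M_s`. As `T_s ξ - ((1-s)μ0 + sμ1) = M_s (ξ - μ0)`, the identity is the behaviour
of a Gaussian density under a linear change of variables `L`:
`φ(L x + b; L μ + b, L Σ Lᵀ) · |det L| = φ(x; μ, Σ)`.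
-/

open Matrix

/-- Gaussian density on `ℝⁿ`:
`φ(x; μ, Σ) = (2π)^{-n/2} (det Σ)^{-1/2} exp(-(1/2)(x-μ)ᵀ Σ⁻¹ (x-μ))`. -/
noncomputable def gaussianDensity (n : ℕ) (μ : Fin n → ℝ) (Sigma : Matrix (Fin n) (Fin n) ℝ)
    (x : Fin n → ℝ) : ℝ :=
  (2 * Real.pi) ^ (-(n : ℝ) / 2) * Sigma.det ^ (-(1 : ℝ) / 2) *
    Real.exp (-(1 / 2) * ((x - μ) ⬝ᵥ Sigma⁻¹ *ᵥ (x - μ)))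

namespace Matrix

theorem PosDef.smul_add_smul {m : Type*} {A B : Matrix m m ℝ} (hA : A.PosDef) (hB : B.PosDef)
    {a b : ℝ} (ha : 0 ≤ a) (hb : 0 ≤ b) (hab : 0 < a + b) : (a • A + b • B).PosDef := by
  rcases ha.eq_or_lt with rfl | ha
  · rw [zero_smul, zero_add]
    exact hB.smul (by simpa using hab)
  · exact (hA.smul ha).add_posSemidef (hB.posSemidef.smul hb)

variable {m R : Type*} [Fintype m] [DecidableEq m] [CommRing R]

theorem dotProduct_conj_inv_mulVec {L S : Matrix m m R} (hL : IsUnit L.det) (v : m → R) :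
    (L *ᵥ v) ⬝ᵥ (L * S * Lᵀ)⁻¹ *ᵥ (L *ᵥ v) = v ⬝ᵥ S⁻¹ *ᵥ v := by
  have hLT : IsUnit Lᵀ.det := by rwa [det_transpose]
  have hS : (L * S * Lᵀ)⁻¹ *ᵥ (L *ᵥ v) = Lᵀ⁻¹ *ᵥ (S⁻¹ *ᵥ v) := by
    rw [mul_inv_rev, mul_inv_rev, mulVec_mulVec, Matrix.mul_assoc, Matrix.mul_assoc,
      nonsing_inv_mul _ hL, Matrix.mul_one, ← mulVec_mulVec]
  rw [hS, dotProduct_mulVec, ← vecMul_transpose, vecMul_vecMul, mul_nonsing_inv _ hLT,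
    vecMul_one]

theorem smul_one_add_smul_inv_mul_mul_inv {S : Matrix m m R} (hS : IsUnit S.det) (a b : R)
    (X : Matrix m m R) :
    a • 1 + b • (S⁻¹ * X * S⁻¹) = S⁻¹ * (a • (S * S) + b • X) * S⁻¹ := by
  have hSS : S⁻¹ * (S * S) * S⁻¹ = 1 := by
    rw [← Matrix.mul_assoc, nonsing_inv_mul _ hS, Matrix.one_mul, mul_nonsing_inv _ hS]
  rw [Matrix.mul_add, Matrix.add_mul, Matrix.mul_smul, Matrix.smul_mul, hSS, Matrix.mul_smul,
    Matrix.smul_mul]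

theorem inv_mul_mul_inv_mul_self_mul {S B : Matrix m m R} (hS : IsUnit S.det) :
    S⁻¹ * B * S⁻¹ * (S * S) * (S⁻¹ * B * S⁻¹) = S⁻¹ * B ^ 2 * S⁻¹ := by
  simp only [Matrix.mul_assoc, nonsing_inv_mul_cancel_left _ _ hS, sq]
  rw [← Matrix.mul_assoc S, mul_nonsing_inv _ hS, Matrix.one_mul]

theorem transpose_inv_mul_mul_inv {S B : Matrix m m R} (hS : S.IsSymm) (hB : B.IsSymm) :
    (S⁻¹ * B * S⁻¹)ᵀ = S⁻¹ * B * S⁻¹ := by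
  rw [transpose_mul, transpose_mul, transpose_nonsing_inv, hS.eq, hB.eq, Matrix.mul_assoc]

end Matrix

theorem Real.rpow_neg_half_sq_mul {a b : ℝ} (ha : a ≠ 0) (hb : 0 < b) :
    (a ^ 2 * b) ^ (-(1 : ℝ) / 2) = |a|⁻¹ * b ^ (-(1 : ℝ) / 2) := by
  rw [Real.mul_rpow (by positivity) hb.le, ← sq_abs, ← Real.rpow_natCast,
    ← Real.rpow_mul (abs_nonneg a)]
  norm_num [Real.rpow_neg_one]

theorem gaussianDensity_conj_mul_abs_det {n : ℕ} {L Sigma : Matrix (Fin n) (Fin n) ℝ}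
    (hL : IsUnit L.det) (hSigma : 0 < Sigma.det) {μ ν x y : Fin n → ℝ}
    (h : y - ν = L *ᵥ (x - μ)) :
    gaussianDensity n ν (L * Sigma * Lᵀ) y * |L.det| = gaussianDensity n μ Sigma x := by
  have hdet : (L * Sigma * Lᵀ).det = L.det ^ 2 * Sigma.det := by
    rw [det_mul, det_mul, det_transpose]; ring
  rw [gaussianDensity, gaussianDensity, h, dotProduct_conj_inv_mulVec hL, hdet,
    Real.rpow_neg_half_sq_mul hL.ne_zero hSigma]
  field_simp [hL.ne_zero]

theorem gaussian_displacement_interpolant_is_gaussian_general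
    (n : ℕ) (μ0 μ1 : Fin n → ℝ)
    (Sigma0 Sigma1 : Matrix (Fin n) (Fin n) ℝ) (hSigma0 : Sigma0.PosDef)
    (hSigma1 : Sigma1.PosDef)
    (S0 : Matrix (Fin n) (Fin n) ℝ) (hS0 : S0.PosSemidef) (hS0sq : S0 ^ 2 = Sigma0)
    (M : Matrix (Fin n) (Fin n) ℝ) (hM : M.PosSemidef) (hMsq : M ^ 2 = S0 * Sigma1 * S0)
    (A : Matrix (Fin n) (Fin n) ℝ) (hA : A = S0⁻¹ * M * S0⁻¹)
    (T : ℝ → (Fin n → ℝ) → (Fin n → ℝ))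
    (hT : ∀ s ξ, T s ξ = (1 - s) • ξ + s • (μ1 + A *ᵥ (ξ - μ0)))
    (Ms Sigmas : ℝ → Matrix (Fin n) (Fin n) ℝ)
    (hMs : ∀ s, Ms s = (1 - s) • (1 : Matrix (Fin n) (Fin n) ℝ) + s • A)
    (hSigmas : ∀ s, Sigmas s = S0⁻¹ * ((1 - s) • Sigma0 + s • M) ^ 2 * S0⁻¹) :
    ∀ s ∈ Set.Icc (0:ℝ) 1, ∀ ξ : Fin n → ℝ,
      gaussianDensity n μ0 Sigma0 ξ
        = gaussianDensity n ((1 - s) • μ0 + s • μ1) (Sigmas s) (T s ξ) * (Ms s).det := by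
  intro s ⟨hs0, hs1⟩ ξ
  rw [sq] at hS0sq hMsq
  have hS0u : IsUnit S0 := isUnit_of_mul_isUnit_left (hS0sq ▸ hSigma0.isUnit)
  have hMpd : M.PosDef := hM.posDef_iff_isUnit.mpr <| isUnit_of_mul_isUnit_left <|
    hMsq ▸ (hS0u.mul hSigma1.isUnit).mul hS0u
  rw [isUnit_iff_isUnit_det] at hS0u
  set B := (1 - s) • Sigma0 + s • M
  have hBpd : B.PosDef := hSigma0.smul_add_smul hMpd (by linarith) hs0 (by linarith)
  have hMsB : Ms s = S0⁻¹ * B * S0⁻¹ := by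
    rw [hMs, hA, smul_one_add_smul_inv_mul_mul_inv hS0u, hS0sq]
  have hMsT : (Ms s)ᵀ = Ms s := by
    rw [hMsB, transpose_inv_mul_mul_inv (isHermitian_iff_isSymm.mp hS0.isHermitian)
      (isHermitian_iff_isSymm.mp hBpd.isHermitian)]
  have hSigmas_conj : Sigmas s = Ms s * Sigma0 * (Ms s)ᵀ := by
    rw [hMsT, hMsB, ← hS0sq, inv_mul_mul_inv_mul_self_mul hS0u, hSigmas]
  have hMs_det : 0 < (Ms s).det := by
    have := (isUnit_nonsing_inv_det _ hS0u).ne_zero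
    rw [hMsB, det_mul, det_mul, mul_right_comm, ← sq]
    exact mul_pos (by positivity) hBpd.det_pos
  have hshift : T s ξ - ((1 - s) • μ0 + s • μ1) = Ms s *ᵥ (ξ - μ0) := by
    rw [hT, hMs, add_mulVec, smul_mulVec, smul_mulVec, one_mulVec]
    module
  rw [hSigmas_conj, ← abs_of_pos hMs_det]
  exact (gaussianDensity_conj_mul_abs_det hMs_det.ne'.isUnit hSigma0.det_pos hshift).symm

/-- with `A = Sigma0^{-1/2}(Sigma0^{1/2} Sigma1 Sigma0^{1/2})^{1/2} Sigma0^{-1/2}`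
(square roots characterized as the unique symmetric positive semidefinite square roots), the
McCann map `Tₛ ξ = (1-s)ξ + s(μ1 + A(ξ-μ0))`, the matrix `Mₛ = (1-s)I + sA`, and the covariance
`Σₛ = Sigma0^{-1/2}((1-s)Sigma0 + s(Sigma0^{1/2} Sigma1 Sigma0^{1/2})^{1/2})² Sigma0^{-1/2}`,
for every `s ∈ [0,1]` and every `ξ ∈ ℝⁿ`,
`φ(ξ; μ0, Sigma0) = φ(Tₛ ξ; (1-s)μ0 + sμ1, Σₛ) · det Mₛ`: the displacement interpolant of two
Gaussians is Gaussian with mean `(1-s)μ0 + sμ1` and covariance `Σₛ`. -/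
theorem gaussian_displacement_interpolant_is_gaussian
    (n : ℕ) (hn : 1 ≤ n) (μ0 μ1 : Fin n → ℝ)
    (Sigma0 Sigma1 : Matrix (Fin n) (Fin n) ℝ) (hSigma0 : Sigma0.PosDef)
    (hSigma1 : Sigma1.PosDef)
    (S0 : Matrix (Fin n) (Fin n) ℝ) (hS0 : S0.PosSemidef) (hS0sq : S0 ^ 2 = Sigma0)
    (M : Matrix (Fin n) (Fin n) ℝ) (hM : M.PosSemidef) (hMsq : M ^ 2 = S0 * Sigma1 * S0)
    (A : Matrix (Fin n) (Fin n) ℝ) (hA : A = S0⁻¹ * M * S0⁻¹)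
    (T : ℝ → (Fin n → ℝ) → (Fin n → ℝ))
    (hT : ∀ s ξ, T s ξ = (1 - s) • ξ + s • (μ1 + A *ᵥ (ξ - μ0)))
    (Ms Sigmas : ℝ → Matrix (Fin n) (Fin n) ℝ)
    (hMs : ∀ s, Ms s = (1 - s) • (1 : Matrix (Fin n) (Fin n) ℝ) + s • A)
    (hSigmas : ∀ s, Sigmas s = S0⁻¹ * ((1 - s) • Sigma0 + s • M) ^ 2 * S0⁻¹) :
    ∀ s ∈ Set.Icc (0:ℝ) 1, ∀ ξ : Fin n → ℝ,
      gaussianDensity n μ0 Sigma0 ξ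
        = gaussianDensity n ((1 - s) • μ0 + s • μ1) (Sigmas s) (T s ξ) * (Ms s).det :=
  gaussian_displacement_interpolant_is_gaussian_general n μ0 μ1 Sigma0 Sigma1 hSigma0 hSigma1 S0 hS0
    hS0sq M hM hMsq A hA T hT Ms Sigmas hMs hSigmas
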